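/- Perturbation bound for reachability values of structurally equivalent games: let G₁ and G₂ be structurally equivalent turn-based stochastic games over the same state set S, let T' ⊆ S be a target set, and let d = dist_R(G₁, G₂) ≥ 0 be their relative distance. Then for every state s, Val_{G₁,◇T'}(s) ≤ (1 + d)^{2|S|} · Val_{G₂,◇T'}(s) and Val_{G₂,◇T'}(s) ≤ (1 + d)^{2|S|} · Val_{G₁,◇T'}(s); equivalently, whenever Val_{G₂,◇T'}(s) > 0, one has (1 + d)^{−2|S|} ≤ Val_{G₁,◇T'}(s) / Val_{G₂,◇T'}(s) ≤ (1 + d)^{2|S|}. -/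

import Mathlib

open scoped ENNReal NNReal

/-- A turn-based stochastic game: finitely many states partitioned into Maximizer
states (`isMax s = true`) and Minimizer states, finitely many actions with a nonempty
set of available actions at every state, and a transition function assigning to every
state and action a probability distribution over states. -/
structure SG (S A : Type*) [Fintype S] [Fintype A] where
  isMax : S → Bool
  actions : S → Finset A
  actions_nonempty : ∀ s, (actions s).Nonempty
  trans : S → A → S → ℝ≥0∞
  trans_sum : ∀ s a, ∑ s' : S, trans s a s' = 1

variable {S A : Type*} [Fintype S] [Fintype A]

/-- A (history-dependent, randomized) strategy: assigns to every history
(a list of past state-action pairs together with the current state) a probability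
distribution over the available actions.  The same type serves for Maximizer and
Minimizer strategies; a strategy is only consulted at the states of its owner. -/
structure Strategy (G : SG S A) where
  act : List (S × A) → S → A → ℝ≥0∞
  act_sum : ∀ h s, ∑ a ∈ G.actions s, act h s a = 1
  act_mem : ∀ h s a, a ∉ G.actions s → act h s a = 0

/-- The memoryless deterministic strategy induced by a function `f : S → A`
choosing an available action in each state. -/
noncomputable def Strategy.ofMD [DecidableEq A] (G : SG S A) (f : S → A)
    (hf : ∀ s, f s ∈ G.actions s) : Strategy G where
  act := fun _ s a => if a = f s then 1 else 0
  act_sum := by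
    intro h s
    rw [Finset.sum_ite_eq' (G.actions s) (f s) (fun _ => (1 : ℝ≥0∞))]
    simp [hf s]
  act_mem := by
    intro h s a ha
    by_cases hfa : a = f s
    · exact absurd (hf s) (by rwa [hfa] at ha)
    · simp [hfa]

/-- Probability, under the strategy profile `(σ, τ)`, that the play starting in state
`s` after history `h` performs exactly the finite sequence `w` of (action, next state)
steps.  This is the cylinder probability of the induced path measure. -/
noncomputable def runProb (G : SG S A) (σ τ : Strategy G) :
    List (S × A) → S → List (A × S) → ℝ≥0∞
  | _, _, [] => 1
  | h, s, (a, s') :: w =>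
      (if G.isMax s then σ.act h s a else τ.act h s a) * G.trans s a s' *
        runProb G σ τ (h ++ [(s, a)]) s' w

/-- Finite-horizon negative exponential utility: the expectation, over plays of length
`n` from `s`, of `b ^ (−γ · (partial total reward))`. -/
noncomputable def utilityN (G : SG S A) (σ τ : Strategy G) (r : S → ℝ≥0) (b γ : ℝ)
    (s : S) (n : ℕ) : ℝ≥0∞ :=
  ∑ w : Fin n → A × S,
    runProb G σ τ [] s (List.ofFn w) *
      ENNReal.ofReal (b ^ (-(γ * ((r s : ℝ) + ∑ i, (r (w i).2 : ℝ)))))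

/-- The negative exponential utility `U_{G,s}(σ,τ) = E[b^{−γ T}]`, obtained as the
monotone limit of its finite-horizon approximations (rewards are nonnegative, so the
integrands decrease to `b^{−γT}`, with `b^{−γ·∞} := 0`). -/
noncomputable def utility (G : SG S A) (σ τ : Strategy G) (r : S → ℝ≥0) (b γ : ℝ)
    (s : S) : ℝ≥0∞ :=
  ⨅ n : ℕ, utilityN G σ τ r b γ s n

/-- Probability that the play from `s` visits the set `T` within the first `n` steps. -/
noncomputable def reachProbN (G : SG S A) (σ τ : Strategy G) (T : Set S) (s : S)
    (n : ℕ) : ℝ≥0∞ :=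
  ∑ w : Fin n → A × S,
    Set.indicator {w : Fin n → A × S | s ∈ T ∨ ∃ i, (w i).2 ∈ T}
      (fun w => runProb G σ τ [] s (List.ofFn w)) w

/-- Probability `P^{(σ,τ)}_{G,s}[◇T]` that the play eventually visits `T`. -/
noncomputable def reachProb (G : SG S A) (σ τ : Strategy G) (T : Set S) (s : S) : ℝ≥0∞ :=
  ⨆ n : ℕ, reachProbN G σ τ T s n

/-- Probability that the total reward accumulated within the first `n` steps exceeds `K`. -/
noncomputable def exceedProbN (G : SG S A) (σ τ : Strategy G) (r : S → ℝ≥0) (K : ℝ)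
    (s : S) (n : ℕ) : ℝ≥0∞ :=
  ∑ w : Fin n → A × S,
    Set.indicator {w : Fin n → A × S | K < (r s : ℝ) + ∑ i, (r (w i).2 : ℝ)}
      (fun w => runProb G σ τ [] s (List.ofFn w)) w

/-- `P^{(σ,τ)}_{G,s}[T > 0]`, the probability that the total reward is positive. -/
noncomputable def probPosReward (G : SG S A) (σ τ : Strategy G) (r : S → ℝ≥0)
    (s : S) : ℝ≥0∞ :=
  ⨆ n : ℕ, exceedProbN G σ τ r 0 s n

/-- `P^{(σ,τ)}_{G,s}[T = ∞]`, the probability that the total reward is infinite. -/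
noncomputable def probInfReward (G : SG S A) (σ τ : Strategy G) (r : S → ℝ≥0)
    (s : S) : ℝ≥0∞ :=
  ⨅ K : ℕ, ⨆ n : ℕ, exceedProbN G σ τ r K s n

/-- `S₀`: the states from which the Maximizer cannot achieve positive total reward with
positive probability, i.e. `sup_σ inf_τ P[T > 0] = 0`. -/
noncomputable def S0 (G : SG S A) (r : S → ℝ≥0) : Set S :=
  {s | (⨆ σ : Strategy G, ⨅ τ : Strategy G, probPosReward G σ τ r s) = 0}

/-- `S∞`: the states from which the Maximizer can ensure infinite total reward almost
surely, i.e. `sup_σ inf_τ P[T = ∞] = 1`. -/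
noncomputable def Sinf (G : SG S A) (r : S → ℝ≥0) : Set S :=
  {s | (⨆ σ : Strategy G, ⨅ τ : Strategy G, probInfReward G σ τ r s) = 1}

/-- The optimal negative exponential utility `U*(s) = inf_σ sup_τ U_{G,s}(σ,τ)`. -/
noncomputable def Ustar (G : SG S A) (r : S → ℝ≥0) (b γ : ℝ) (s : S) : ℝ≥0∞ :=
  ⨅ σ : Strategy G, ⨆ τ : Strategy G, utility G σ τ r b γ s

/-- The entropic risk `−(1/γ)·log_b u` associated to a utility value `u ∈ [0,1]`,
with `−log_b 0 := ∞`. -/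
noncomputable def erisk (b γ : ℝ) (u : ℝ≥0∞) : ℝ≥0∞ :=
  if u = 0 then ⊤ else ENNReal.ofReal (-(1 / γ) * Real.logb b u.toReal)

/-- The entropic risk of the total reward under profile `(σ, τ)` from `s`. -/
noncomputable def ERiskVal (G : SG S A) (σ τ : Strategy G) (r : S → ℝ≥0) (b γ : ℝ)
    (s : S) : ℝ≥0∞ :=
  erisk b γ (utility G σ τ r b γ s)

/-- The optimal entropic risk `ERisk*(s) = sup_σ inf_τ ERisk_{G,s}(σ,τ)`. -/
noncomputable def ERiskStar (G : SG S A) (r : S → ℝ≥0) (b γ : ℝ) (s : S) : ℝ≥0∞ :=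
  ⨆ σ : Strategy G, ⨅ τ : Strategy G, ERiskVal G σ τ r b γ s

/-- The reachability value `Val_{G,◇T}(s)`: the best probability of eventually reaching
`T` that the Maximizer can guarantee against the Minimizer, using memoryless
deterministic strategies. -/
noncomputable def MDReachVal [DecidableEq A] (G : SG S A) (T : Set S) (s : S) : ℝ≥0∞ :=
  ⨆ f : {f : S → A // ∀ s, f s ∈ G.actions s},
    ⨅ g : {g : S → A // ∀ s, g s ∈ G.actions s},
      reachProb G (Strategy.ofMD G f.1 f.2) (Strategy.ofMD G g.1 g.2) T s

/-- The relative distance `dist_R(G₁,G₂)`: the largest relative ratio between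
corresponding transition probabilities of two structurally equivalent games, minus 1. -/
noncomputable def distR (G₁ G₂ : SG S A) : ℝ :=
  sSup (insert 1
    {x : ℝ | ∃ (s : S) (a : A) (s' : S), a ∈ G₁.actions s ∧ G₁.trans s a s' ≠ 0 ∧
      x = max ((G₁.trans s a s').toReal / (G₂.trans s a s').toReal)
              ((G₂.trans s a s').toReal / (G₁.trans s a s').toReal)}) - 1


/- ===================== auxiliary development ===================== -/

open Matrix

attribute [local instance] Classical.propDecidable

section Forest
variable {V : Type*} [Fintype V] [DecidableEq V]

def IsForest (κ : V → Option V) : Prop :=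
  ∃ ρ : V → ℕ, ∀ u v, κ u = some v → ρ v < ρ u

noncomputable def fvec (o : Option V) : V → ℝ := o.elim 0 (fun v => Pi.single v 1)

noncomputable def fmat (κ : V → Option V) : Matrix V V ℝ :=
  Matrix.of fun u => Pi.single u 1 - fvec (κ u)

def iterOpt (κ : V → Option V) : ℕ → V → Option V
  | 0, u => some u
  | n+1, u => (κ u).bind (iterOpt κ n)

omit [Fintype V] [DecidableEq V] in
lemma iterOpt_add (κ : V → Option V) (m n : ℕ) (u : V) :
    iterOpt κ (m + n) u = (iterOpt κ m u).bind (iterOpt κ n) := by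
  induction m generalizing u with
  | zero => simp [iterOpt]
  | succ m ih =>
    have hmn : m + 1 + n = (m + n) + 1 := by ring
    rw [hmn]
    show (κ u).bind (iterOpt κ (m+n)) = ((κ u).bind (iterOpt κ m)).bind (iterOpt κ n)
    cases h : κ u with
    | none => rfl
    | some v => simp only [Option.bind_some]; exact ih v

omit [Fintype V] in
lemma isForest_of_terminating (κ : V → Option V)
    (h : ∀ u, ∃ n, iterOpt κ n u = none) : IsForest κ := by
  refine ⟨fun u => Nat.find (h u), fun u v huv => ?_⟩
  show Nat.find (h v) < Nat.find (h u)
  have h0 : iterOpt κ 0 u ≠ none := by simp [iterOpt]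
  have hpos : 0 < Nat.find (h u) := by
    rcases Nat.eq_zero_or_pos (Nat.find (h u)) with h' | h'
    · exact absurd (h' ▸ Nat.find_spec (h u)) h0
    · exact h'
  have hspec := Nat.find_spec (h u)
  obtain ⟨k, hk⟩ := Nat.exists_eq_add_of_lt hpos
  have hfind : Nat.find (h u) = k + 1 := by omega
  rw [hfind] at hspec
  have hkv : iterOpt κ (k+1) u = iterOpt κ k v := by
    show (κ u).bind (iterOpt κ k) = _
    rw [huv]; rfl
  have hv : iterOpt κ k v = none := by rw [← hkv]; exact hspec
  have := Nat.find_min' (h v) hv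
  omega

lemma exists_cycle_of_not_isForest (κ : V → Option V) (h : ¬ IsForest κ) :
    ∃ o : ℕ → V, (∀ n, κ (o n) = some (o (n+1))) ∧ ∃ i j, i < j ∧ o i = o j := by
  have hna : ¬ ∀ u, ∃ n, iterOpt κ n u = none := fun hh => h (isForest_of_terminating κ hh)
  push_neg at hna
  obtain ⟨u, hu⟩ := hna
  have hsome : ∀ n, (iterOpt κ n u).isSome := by
    intro n
    cases hn : iterOpt κ n u with
    | none => exact absurd hn (hu n)
    | some v => rfl
  refine ⟨fun n => (iterOpt κ n u).get (hsome n), ?_, ?_⟩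
  · intro n
    show κ ((iterOpt κ n u).get (hsome n)) = some ((iterOpt κ (n+1) u).get (hsome (n+1)))
    have h1 : iterOpt κ (n + 1) u = (iterOpt κ n u).bind (iterOpt κ 1) := iterOpt_add κ n 1 u
    have h2 : iterOpt κ n u = some ((iterOpt κ n u).get (hsome n)) := by simp
    rw [h2] at h1
    have h3 : iterOpt κ 1 ((iterOpt κ n u).get (hsome n)) = κ ((iterOpt κ n u).get (hsome n)) := by
      show (κ _).bind (iterOpt κ 0) = _
      cases κ ((iterOpt κ n u).get (hsome n)) <;> rfl
    simp only [Option.bind_some, h3] at h1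
    rw [← h1]
    exact (Option.some_get (hsome (n+1))).symm
  · obtain ⟨i, j, hij, hoij⟩ := Finite.exists_ne_map_eq_of_infinite
      (fun n => (iterOpt κ n u).get (hsome n))
    rcases lt_or_gt_of_ne hij with h' | h'
    · exact ⟨i, j, h', hoij⟩
    · exact ⟨j, i, h', hoij.symm⟩

lemma det_fmat_of_isForest (κ : V → Option V) (h : IsForest κ) : (fmat κ).det = 1 := by
  obtain ⟨ρ, hρ⟩ := h
  set m := Fintype.card V with hm
  set e : Fin m ≃ V := (Fintype.equivFin V).symm with he
  set p := Tuple.sort (ρ ∘ e) with hp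
  set σ : Fin m ≃ V := p.trans e with hσ
  have hmono : Monotone (fun i => ρ (σ i)) := Tuple.monotone_sort (ρ ∘ e)
  have hsub : ((fmat κ).submatrix σ σ).det = (fmat κ).det := Matrix.det_submatrix_equiv_self σ _
  rw [← hsub]
  have hdiag : ∀ i, ((fmat κ).submatrix σ σ) i i = 1 := by
    intro i
    have hne : κ (σ i) ≠ some (σ i) := fun hc => lt_irrefl _ (hρ _ _ hc)
    simp only [Matrix.submatrix_apply, fmat, Matrix.of_apply, Pi.sub_apply, Pi.single_eq_same]
    cases hκ : κ (σ i) with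
    | none => simp [fvec]
    | some v =>
      have hv : v ≠ σ i := fun hv => hne (hv ▸ hκ)
      simp [fvec, Pi.single_eq_of_ne' hv]
  have htri : ((fmat κ).submatrix σ σ).BlockTriangular OrderDual.toDual := by
    intro i j hij
    simp only [OrderDual.toDual_lt_toDual] at hij
    have hne : σ i ≠ σ j := fun hc => absurd (σ.injective hc) (ne_of_lt hij)
    simp only [Matrix.submatrix_apply, fmat, Matrix.of_apply, Pi.sub_apply,
      Pi.single_eq_of_ne' hne]
    cases hκ : κ (σ i) with
    | none => simp [fvec]
    | some v =>
      have hvj : v ≠ σ j := by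
        intro hv
        subst hv
        have h1 := hρ _ _ hκ
        have h2 : ρ (σ i) ≤ ρ (σ j) := hmono (le_of_lt hij)
        omega
      simp [fvec, Pi.single_eq_of_ne' hvj]
  rw [Matrix.det_of_lowerTriangular _ htri]
  rw [Finset.prod_congr rfl (fun i _ => hdiag i)]
  simp

lemma det_fmat_of_not_isForest (κ : V → Option V) (h : ¬ IsForest κ) : (fmat κ).det = 0 := by
  obtain ⟨o, ho, i, j, hij, hoij⟩ := exists_cycle_of_not_isForest κ h
  rw [← Matrix.exists_vecMul_eq_zero_iff]
  refine ⟨fun w => ∑ t ∈ Finset.Ico i j, (if o t = w then (1:ℝ) else 0), ?_, ?_⟩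
  · intro hg
    have hgi := congrFun hg (o i)
    simp only [Pi.zero_apply] at hgi
    have hpos : (0:ℝ) < ∑ t ∈ Finset.Ico i j, (if o t = o i then (1:ℝ) else 0) := by
      refine Finset.sum_pos' (fun t _ => by positivity) ⟨i, ?_, by simp⟩
      simp [Finset.mem_Ico, hij, le_refl]
    rw [hgi] at hpos
    exact lt_irrefl _ hpos
  · funext c
    show (∑ w, (∑ t ∈ Finset.Ico i j, if o t = w then (1:ℝ) else 0) * fmat κ w c) = 0
    have hdist : ∀ w, (∑ t ∈ Finset.Ico i j, if o t = w then (1:ℝ) else 0) * fmat κ w c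
        = ∑ t ∈ Finset.Ico i j, (if o t = w then (1:ℝ) else 0) * fmat κ w c := by
      intro w; rw [Finset.sum_mul]
    simp_rw [hdist]
    rw [Finset.sum_comm]
    have hterm : ∀ t, (∑ w, (if o t = w then (1:ℝ) else 0) * fmat κ w c)
        = (Pi.single (o t) (1:ℝ) : V → ℝ) c - (Pi.single (o (t+1)) (1:ℝ) : V → ℝ) c := by
      intro t
      rw [Finset.sum_eq_single (o t)]
      · simp [fmat, ho t, fvec]
      · intro w _ hw; simp [Ne.symm hw]
      · intro hw; exact absurd (Finset.mem_univ _) hw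
    rw [Finset.sum_congr rfl (fun t _ => hterm t)]
    rw [Finset.sum_Ico_eq_sum_range]
    have htel := Finset.sum_range_sub'
      (fun r => (Pi.single (o (i + r)) (1:ℝ) : V → ℝ) c) (j - i)
    have hsh : ∀ k : ℕ, (Pi.single (o (i+k)) (1:ℝ) : V → ℝ) c - (Pi.single (o (i+k+1)) (1:ℝ) : V → ℝ) c
        = (Pi.single (o (i+k)) (1:ℝ) : V → ℝ) c - (Pi.single (o (i+(k+1))) (1:ℝ) : V → ℝ) c := by
      intro k; rw [Nat.add_assoc]
    rw [Finset.sum_congr rfl (fun k _ => hsh k), htel, show i + (j - i) = j from by omega]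
    simp only [Nat.add_zero]
    rw [hoij, sub_self]

lemma det_fmat (κ : V → Option V) : (fmat κ).det = if IsForest κ then 1 else 0 := by
  by_cases h : IsForest κ
  · rw [if_pos h]; exact det_fmat_of_isForest κ h
  · rw [if_neg h]; exact det_fmat_of_not_isForest κ h

variable {C : Type*} [Fintype C]

lemma det_expand (w : V → C → ℝ) (tm : V → C → Option V)
    (M : Matrix V V ℝ)
    (hM : ∀ u, M u = ∑ c : C, w u c • (Pi.single u 1 - fvec (tm u c))) :
    M.det = ∑ κ : V → C,
      (∏ u, w u (κ u)) * (if IsForest (fun u => tm u (κ u)) then 1 else 0) := by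
  have hMf : (M : V → V → ℝ)
      = fun u => ∑ c : C, w u c • (Pi.single u 1 - fvec (tm u c)) := funext hM
  have h0 : M.det = Matrix.detRowAlternating.toMultilinearMap
      (fun u => ∑ c : C, w u c • (Pi.single u 1 - fvec (tm u c))) := by
    rw [← hMf]; rfl
  rw [h0, MultilinearMap.map_sum]
  refine Finset.sum_congr rfl (fun κ _ => ?_)
  rw [MultilinearMap.map_smul_univ]
  have : Matrix.detRowAlternating.toMultilinearMap
      (fun u => Pi.single u 1 - fvec (tm u (κ u)))
      = (fmat (fun u => tm u (κ u))).det := rfl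
  rw [this, det_fmat]
  simp [smul_eq_mul]

end Forest


section MC
variable {X : Type*} [Fintype X]

noncomputable def ry (P : X → X → ℝ≥0∞) (T : Set X) : ℕ → X → ℝ≥0∞
  | 0 => fun s => if s ∈ T then 1 else 0
  | n+1 => fun s => if s ∈ T then 1 else ∑ t, P s t * ry P T n t

noncomputable def rx (P : X → X → ℝ≥0∞) (T : Set X) (s : X) : ℝ≥0∞ := ⨆ n, ry P T n s

variable {P : X → X → ℝ≥0∞} {T : Set X}

lemma ry_le_one (hP : ∀ s, ∑ t, P s t = 1) : ∀ n s, ry P T n s ≤ 1 := by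
  intro n
  induction n with
  | zero => intro s; by_cases h : s ∈ T <;> simp [ry, h]
  | succ n ih =>
    intro s
    by_cases h : s ∈ T
    · simp [ry, h]
    · simp only [ry, h, if_false]
      calc ∑ t, P s t * ry P T n t ≤ ∑ t, P s t * 1 :=
            Finset.sum_le_sum (fun t _ => mul_le_mul_right (ih t) _)
        _ = 1 := by simp [hP s]

lemma ry_mono (n : ℕ) : ∀ s, ry P T n s ≤ ry P T (n+1) s := by
  induction n with
  | zero =>
    intro s
    by_cases h : s ∈ T <;> simp [ry, h]
  | succ n ih =>
    intro s
    by_cases h : s ∈ T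
    · simp [ry, h]
    · simp only [ry, h, if_false]
      exact Finset.sum_le_sum (fun t _ => mul_le_mul_right (ih t) _)

lemma ry_monotone (s : X) : Monotone (fun n => ry P T n s) :=
  monotone_nat_of_le_succ (fun n => ry_mono n s)

lemma ry_le_rx (n : ℕ) (s : X) : ry P T n s ≤ rx P T s := le_iSup (fun n => ry P T n s) n

lemma rx_le_one (hP : ∀ s, ∑ t, P s t = 1) (s : X) : rx P T s ≤ 1 :=
  iSup_le (fun n => ry_le_one hP n s)

lemma rx_mem (s : X) (h : s ∈ T) : rx P T s = 1 := by
  apply le_antisymm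
  · exact iSup_le fun n => by cases n <;> simp [ry, h]
  · exact le_trans (by simp [ry, h]) (ry_le_rx 0 s)

lemma rx_harmonic (s : X) (h : s ∉ T) : rx P T s = ∑ t, P s t * rx P T t := by
  have h1 : rx P T s = ⨆ n, ry P T (n+1) s := by
    apply le_antisymm
    · exact iSup_le fun n => le_trans (ry_mono n s) (le_iSup (fun n => ry P T (n+1) s) n)
    · exact iSup_le fun n => ry_le_rx (n+1) s
  rw [h1]
  have h2 : ∀ n, ry P T (n+1) s = ∑ t, P s t * ry P T n t := fun n => by
    simp [ry, h]
  simp_rw [h2]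
  rw [← ENNReal.finsetSum_iSup_of_monotone
    (fun t a b hab => mul_le_mul_right (ry_monotone t hab) (P s t))]
  refine Finset.sum_congr rfl (fun t _ => ?_)
  rw [← ENNReal.mul_iSup]
  rfl

lemma ry_compare {P₁ P₂ : X → X → ℝ≥0∞} {c : ℝ≥0∞} (hc : 1 ≤ c)
    (h12 : ∀ s t, P₁ s t ≤ c * P₂ s t) :
    ∀ n s, ry P₁ T n s ≤ c ^ n * ry P₂ T n s := by
  intro n
  induction n with
  | zero => intro s; simp [ry]
  | succ n ih =>
    intro s
    by_cases h : s ∈ T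
    · simp only [ry, h, if_true, mul_one]
      exact le_trans hc (le_self_pow₀ (by exact_mod_cast hc) (Nat.succ_ne_zero n))
    · simp only [ry, h, if_false]
      calc ∑ t, P₁ s t * ry P₁ T n t
          ≤ ∑ t, (c * P₂ s t) * (c ^ n * ry P₂ T n t) :=
            Finset.sum_le_sum (fun t _ => mul_le_mul' (h12 s t) (ih t))
        _ = c ^ (n+1) * ∑ t, P₂ s t * ry P₂ T n t := by
            rw [Finset.mul_sum]
            refine Finset.sum_congr rfl (fun t _ => ?_)
            ring

lemma rx_zero_of_zero {P₁ P₂ : X → X → ℝ≥0∞} {c : ℝ≥0∞} (hc : 1 ≤ c)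
    (h12 : ∀ s t, P₁ s t ≤ c * P₂ s t) (s : X) (h : rx P₂ T s = 0) :
    rx P₁ T s = 0 := by
  have h2 : ∀ n, ry P₂ T n s = 0 := fun n =>
    le_antisymm (h ▸ ry_le_rx n s) (zero_le)
  refine le_antisymm (iSup_le fun n => ?_) (zero_le)
  calc ry P₁ T n s ≤ c ^ n * ry P₂ T n s := ry_compare hc h12 n s
    _ = 0 := by rw [h2 n, mul_zero]

end MC



section MCAliases
variable {X : Type*} [Fintype X]
lemma ry_le_rx' (P : X → X → ℝ≥0∞) (T : Set X) (n : ℕ) (s : X) : ry P T n s ≤ rx P T s :=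
  ry_le_rx n s
lemma rx_le_one' (P : X → X → ℝ≥0∞) (T : Set X) (hP : ∀ s, ∑ t, P s t = 1) (s : X) :
    rx P T s ≤ 1 := rx_le_one hP s
lemma rx_mem' (P : X → X → ℝ≥0∞) (T : Set X) (s : X) (h : s ∈ T) : rx P T s = 1 :=
  rx_mem s h
lemma rx_harmonic' (P : X → X → ℝ≥0∞) (T : Set X) (s : X) (h : s ∉ T) :
    rx P T s = ∑ t, P s t * rx P T t := rx_harmonic s h
lemma rx_zero_of_zero' (P₁ P₂ : X → X → ℝ≥0∞) (T : Set X) {c : ℝ≥0∞} (hc : 1 ≤ c)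
    (h12 : ∀ s t, P₁ s t ≤ c * P₂ s t) (s : X) (h : rx P₂ T s = 0) : rx P₁ T s = 0 :=
  rx_zero_of_zero hc h12 s h
end MCAliases


section MCQ

variable {X : Type*} [Fintype X]

/-- transition matrix restricted to the states satisfying `q`, as a real matrix -/
noncomputable def Qmat (P : X → X → ℝ≥0∞) (q : X → Prop) :
    Matrix {u : X // q u} {u : X // q u} ℝ :=
  Matrix.of fun u v => (P u.1 v.1).toReal

/-- one-step probability of hitting the target -/
noncomputable def bv (P : X → X → ℝ≥0∞) (T : Set X) (q : X → Prop) :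
    {u : X // q u} → ℝ :=
  fun u => ∑ t, if t ∈ T then (P u.1 t).toReal else 0

/-- one-step probability of moving to a worthless state -/
noncomputable def zv (P : X → X → ℝ≥0∞) (T : Set X) (q : X → Prop) :
    {u : X // q u} → ℝ :=
  fun u => ∑ t, if t ∉ T ∧ ¬ q t then (P u.1 t).toReal else 0

/-- decoration weights -/
noncomputable def wf (P : X → X → ℝ≥0∞) (T : Set X) (q : X → Prop) :
    {u : X // q u} → (Option {u : X // q u} ⊕ Unit) → ℝ :=
  fun u c => match c with
  | Sum.inl (some v) => (P u.1 v.1).toReal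
  | Sum.inl none => bv P T q u
  | Sum.inr _ => zv P T q u

def tmB (q : X → Prop) : {u : X // q u} → (Option {u : X // q u} ⊕ Unit) → Option {u : X // q u} :=
  fun _ c => match c with
  | Sum.inl o => o
  | Sum.inr _ => none

def tmA (q : X → Prop) (s0 : {u : X // q u}) :
    {u : X // q u} → (Option {u : X // q u} ⊕ Unit) → Option {u : X // q u} :=
  fun _ c => match c with
  | Sum.inl (some v) => some v
  | Sum.inl none => some s0
  | Sum.inr _ => none

noncomputable def WW (P : X → X → ℝ≥0∞) (T : Set X) (q : X → Prop)
    (κ : {u : X // q u} → (Option {u : X // q u} ⊕ Unit)) : ℝ :=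
  ∏ u, wf P T q u (κ u)

noncomputable def BB (P : X → X → ℝ≥0∞) (T : Set X) (q : X → Prop) : ℝ :=
  ∑ κ : {u : X // q u} → (Option {u : X // q u} ⊕ Unit),
    WW P T q κ * (if IsForest (fun u => tmB q u (κ u)) then 1 else 0)

noncomputable def NN (P : X → X → ℝ≥0∞) (T : Set X) (q : X → Prop) (s0 : {u : X // q u}) : ℝ :=
  ∑ κ : {u : X // q u} → (Option {u : X // q u} ⊕ Unit),
    WW P T q κ * (if IsForest (fun u => tmB q u (κ u)) ∧
      ¬ IsForest (fun u => tmA q s0 u (κ u)) then 1 else 0)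

variable {P : X → X → ℝ≥0∞} {T : Set X} {q : X → Prop}

lemma P_ne_top (hrow : ∀ s, ∑ t, P s t = 1) (u t : X) : P u t ≠ ⊤ := by
  intro h
  have h1 : P u t ≤ ∑ t', P u t' := Finset.single_le_sum (fun _ _ => zero_le) (Finset.mem_univ t)
  rw [hrow u, h] at h1
  exact (by simp : ¬ (⊤:ℝ≥0∞) ≤ 1) h1

lemma sum_toReal_row (hrow : ∀ s, ∑ t, P s t = 1) (u : X) :
    ∑ t, (P u t).toReal = 1 := by
  rw [← ENNReal.toReal_sum (fun t _ => P_ne_top hrow u t), hrow u, ENNReal.toReal_one]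

lemma sum_split (hq : ∀ t, q t → t ∉ T) (f : X → ℝ) :
    ∑ t, f t = (∑ t, if t ∈ T then f t else 0)
      + ((∑ v : {u : X // q u}, f v.1) + (∑ t, if t ∉ T ∧ ¬ q t then f t else 0)) := by
  have hsub : (∑ v : {u : X // q u}, f v.1) = ∑ t, if q t then f t else 0 := by
    rw [← Finset.sum_filter]
    exact (Finset.sum_subtype (Finset.univ.filter q) (fun x => by simp) f).symm
  rw [hsub, ← Finset.sum_add_distrib, ← Finset.sum_add_distrib]
  refine Finset.sum_congr rfl (fun t _ => ?_)
  by_cases hT : t ∈ T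
  · have : ¬ q t := fun hqt => hq t hqt hT
    simp [hT, this]
  · by_cases hqt : q t
    · simp [hT, hqt]
    · simp [hT, hqt]

lemma row_mass (hrow : ∀ s, ∑ t, P s t = 1) (hq : ∀ t, q t → t ∉ T) (u : {u : X // q u}) :
    bv P T q u + ((∑ v : {u : X // q u}, (P u.1 v.1).toReal) + zv P T q u) = 1 := by
  have := sum_split hq (fun t => (P u.1 t).toReal)
  rw [sum_toReal_row hrow u.1] at this
  rw [bv, zv, ← this]


lemma sum_single_mul {V : Type*} [Fintype V] [DecidableEq V] (g : V → ℝ) (v : V) :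
    ∑ v' : V, g v' * (Pi.single v' (1:ℝ) : V → ℝ) v = g v := by
  simp [Pi.single_apply, mul_ite]

lemma row_identity_B (hrow : ∀ s, ∑ t, P s t = 1) (hq : ∀ t, q t → t ∉ T)
    (u : {u : X // q u}) :
    (1 - Qmat P q) u = ∑ c : Option {u : X // q u} ⊕ Unit,
      wf P T q u c • ((Pi.single u 1 : {u : X // q u} → ℝ) - fvec (tmB q u c)) := by
  funext v
  simp only [Finset.sum_apply, Pi.smul_apply, Pi.sub_apply, smul_eq_mul]
  rw [Fintype.sum_sum_type]
  rw [Fintype.sum_option]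
  simp only [tmB, wf, fvec, Option.elim, Pi.zero_apply, sub_zero]
  have hunit : ∑ _x : Unit, zv P T q u * (Pi.single u 1 : {u : X // q u} → ℝ) v
      = zv P T q u * (Pi.single u 1 : {u : X // q u} → ℝ) v := by simp
  rw [hunit]
  have hmid : ∑ x : {u : X // q u}, (P u.1 x.1).toReal *
        ((Pi.single u 1 : {u : X // q u} → ℝ) v - (Pi.single x 1 : {u : X // q u} → ℝ) v)
      = (∑ x : {u : X // q u}, (P u.1 x.1).toReal) * (Pi.single u 1 : {u : X // q u} → ℝ) v
        - (P u.1 v.1).toReal := by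
    simp only [mul_sub]
    rw [Finset.sum_sub_distrib, ← Finset.sum_mul, sum_single_mul (fun x => (P u.1 x.1).toReal) v]
  rw [hmid]
  have hmass := row_mass hrow hq u
  have hLHS : (1 - Qmat P q) u v = (if u = v then (1:ℝ) else 0) - (P u.1 v.1).toReal := by
    simp [Qmat, Matrix.sub_apply, Matrix.one_apply]
  rw [hLHS]
  have hsingle : (Pi.single u (1:ℝ) : {u : X // q u} → ℝ) v = if u = v then 1 else 0 := by
    rw [Pi.single_apply]; simp [eq_comm]
  rw [hsingle]
  by_cases huv : u = v
  · subst huv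
    simp only [eq_self_iff_true, if_true, mul_one]
    linarith
  · simp only [if_neg huv, mul_zero]
    linarith

lemma row_identity_A (hrow : ∀ s, ∑ t, P s t = 1) (hq : ∀ t, q t → t ∉ T)
    (s0 : {u : X // q u}) (u : {u : X // q u}) :
    (1 - Qmat P q).updateCol s0 (fun w => (1 - Qmat P q) w s0 - bv P T q w) u
      = ∑ c : Option {u : X // q u} ⊕ Unit,
      wf P T q u c • ((Pi.single u 1 : {u : X // q u} → ℝ) - fvec (tmA q s0 u c)) := by
  funext v
  simp only [Finset.sum_apply, Pi.smul_apply, Pi.sub_apply, smul_eq_mul]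
  rw [Fintype.sum_sum_type]
  rw [Fintype.sum_option]
  simp only [tmA, wf, fvec, Option.elim, Pi.zero_apply, sub_zero]
  have hunit : ∑ _x : Unit, zv P T q u * (Pi.single u 1 : {u : X // q u} → ℝ) v
      = zv P T q u * (Pi.single u 1 : {u : X // q u} → ℝ) v := by simp
  rw [hunit]
  have hmid : ∑ x : {u : X // q u}, (P u.1 x.1).toReal *
        ((Pi.single u 1 : {u : X // q u} → ℝ) v - (Pi.single x 1 : {u : X // q u} → ℝ) v)
      = (∑ x : {u : X // q u}, (P u.1 x.1).toReal) * (Pi.single u 1 : {u : X // q u} → ℝ) v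
        - (P u.1 v.1).toReal := by
    simp only [mul_sub]
    rw [Finset.sum_sub_distrib, ← Finset.sum_mul, sum_single_mul (fun x => (P u.1 x.1).toReal) v]
  rw [hmid]
  have hmass := row_mass hrow hq u
  have hLHS : (1 - Qmat P q).updateCol s0 (fun w => (1 - Qmat P q) w s0 - bv P T q w) u v
      = if v = s0 then ((if u = s0 then (1:ℝ) else 0) - (P u.1 s0.1).toReal - bv P T q u)
        else ((if u = v then (1:ℝ) else 0) - (P u.1 v.1).toReal) := by
    rw [Matrix.updateCol_apply]
    by_cases hv : v = s0
    · simp [hv, Qmat, Matrix.sub_apply, Matrix.one_apply]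
    · simp [hv, Qmat, Matrix.sub_apply, Matrix.one_apply]
  rw [hLHS]
  have hsingle : (Pi.single u (1:ℝ) : {u : X // q u} → ℝ) v = if u = v then 1 else 0 := by
    rw [Pi.single_apply]; simp [eq_comm]
  have hsingle0 : (Pi.single s0 (1:ℝ) : {u : X // q u} → ℝ) v = if v = s0 then 1 else 0 := by
    rw [Pi.single_apply]
  rw [hsingle, hsingle0]
  by_cases hv : v = s0
  · subst hv
    by_cases huv : u = v
    · subst huv
      simp only [eq_self_iff_true, if_true, mul_one, mul_sub]
      linarith
    · simp only [eq_self_iff_true, if_true, if_neg huv, mul_zero, mul_one, mul_sub]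
      linarith
  · by_cases huv : u = v
    · subst huv
      simp only [eq_self_iff_true, if_true, if_neg hv, mul_one, mul_zero, mul_sub]
      linarith
    · simp only [if_neg hv, if_neg huv, mul_zero, mul_sub]
      linarith

noncomputable def AA (P : X → X → ℝ≥0∞) (T : Set X) (q : X → Prop) (s0 : {u : X // q u}) : ℝ :=
  ∑ κ : {u : X // q u} → (Option {u : X // q u} ⊕ Unit),
    WW P T q κ * (if IsForest (fun u => tmA q s0 u (κ u)) then 1 else 0)

lemma det_B (hrow : ∀ s, ∑ t, P s t = 1) (hq : ∀ t, q t → t ∉ T) :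
    (1 - Qmat P q).det = BB P T q :=
  det_expand (wf P T q) (tmB q) _ (row_identity_B hrow hq)

lemma det_A (hrow : ∀ s, ∑ t, P s t = 1) (hq : ∀ t, q t → t ∉ T) (s0 : {u : X // q u}) :
    ((1 - Qmat P q).updateCol s0 (fun w => (1 - Qmat P q) w s0 - bv P T q w)).det
      = AA P T q s0 :=
  det_expand (wf P T q) (tmA q s0) _ (row_identity_A hrow hq s0)

lemma forest_A_to_B (s0 : {u : X // q u})
    (κ : {u : X // q u} → (Option {u : X // q u} ⊕ Unit)) :
    IsForest (fun u => tmA q s0 u (κ u)) → IsForest (fun u => tmB q u (κ u)) := by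
  rintro ⟨ρ, hρ⟩
  refine ⟨ρ, fun u v huv => ?_⟩
  apply hρ u v
  change tmB q u (κ u) = some v at huv
  show tmA q s0 u (κ u) = some v
  cases hc : κ u with
  | inl o =>
    cases o with
    | none => rw [hc] at huv; exact absurd huv (by simp [tmB])
    | some w =>
      rw [hc] at huv
      simp only [tmB] at huv
      simp [tmA, hc, huv]
  | inr _ => rw [hc] at huv; exact absurd huv (by simp [tmB])

lemma det_N (hrow : ∀ s, ∑ t, P s t = 1) (hq : ∀ t, q t → t ∉ T) (s0 : {u : X // q u}) :
    ((1 - Qmat P q).updateCol s0 (bv P T q)).det = NN P T q s0 := by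
  set M := 1 - Qmat P q with hM
  have hsplit : M.det = (M.updateCol s0 (bv P T q)).det
      + (M.updateCol s0 (fun w => M w s0 - bv P T q w)).det := by
    have := Matrix.det_updateCol_add M s0 (bv P T q) (fun w => M w s0 - bv P T q w)
    have harg : (bv P T q + fun w => M w s0 - bv P T q w) = fun w => M w s0 := by
      funext w; simp only [Pi.add_apply]; ring
    rw [harg] at this
    rw [← this, Matrix.updateCol_eq_self]
  have hBB : M.det = BB P T q := det_B hrow hq
  have hAA : (M.updateCol s0 (fun w => M w s0 - bv P T q w)).det = AA P T q s0 :=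
    det_A hrow hq s0
  have : (M.updateCol s0 (bv P T q)).det = BB P T q - AA P T q s0 := by
    rw [← hBB, ← hAA] at *
    linarith [hsplit]
  rw [this, BB, AA, NN, ← Finset.sum_sub_distrib]
  refine Finset.sum_congr rfl (fun κ _ => ?_)
  by_cases hA : IsForest (fun u => tmA q s0 u (κ u))
  · have hB : IsForest (fun u => tmB q u (κ u)) := forest_A_to_B s0 κ hA
    simp [hA, hB]
  · by_cases hB : IsForest (fun u => tmB q u (κ u)) <;> simp [hA, hB]

lemma mulVec_id (hrow : ∀ s, ∑ t, P s t = 1) (hq : ∀ t, q t → t ∉ T)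
    (hz : ∀ t, t ∉ T → ¬ q t → rx P T t = 0) :
    (1 - Qmat P q).mulVec (fun u => (rx P T u.1).toReal) = bv P T q := by
  funext u
  rw [Matrix.sub_mulVec, Matrix.one_mulVec]
  have hu : u.1 ∉ T := hq u.1 u.2
  have hrxfin : ∀ t, rx P T t ≠ ⊤ := fun t =>
    ne_top_of_le_ne_top (by simp) (rx_le_one' P T hrow t)
  have hfin : ∀ t, P u.1 t * rx P T t ≠ ⊤ := fun t =>
    ENNReal.mul_ne_top (P_ne_top hrow u.1 t) (hrxfin t)
  have hharm : (rx P T u.1).toReal = ∑ t, (P u.1 t).toReal * (rx P T t).toReal := by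
    rw [rx_harmonic' P T u.1 hu, ENNReal.toReal_sum (fun t _ => hfin t)]
    exact Finset.sum_congr rfl (fun t _ => ENNReal.toReal_mul)
  have hsplit := sum_split hq (fun t => (P u.1 t).toReal * (rx P T t).toReal)
  have hTpart : (∑ t, if t ∈ T then (P u.1 t).toReal * (rx P T t).toReal else 0) = bv P T q u := by
    refine Finset.sum_congr rfl (fun t _ => ?_)
    by_cases ht : t ∈ T
    · simp [ht, rx_mem' P T t ht]
    · simp [ht]
  have hZpart : (∑ t, if t ∉ T ∧ ¬ q t then (P u.1 t).toReal * (rx P T t).toReal else 0) = 0 := by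
    refine Finset.sum_eq_zero (fun t _ => ?_)
    by_cases ht : t ∉ T ∧ ¬ q t
    · simp [ht, hz t ht.1 ht.2]
    · simp [ht]
  rw [hTpart, hZpart] at hsplit
  have hQ : ((Qmat P q).mulVec (fun u => (rx P T u.1).toReal)) u
      = ∑ v : {u : X // q u}, (P u.1 v.1).toReal * (rx P T v.1).toReal := rfl
  simp only [Pi.sub_apply, hQ]
  rw [hharm, hsplit]
  ring

lemma cramer_combo {V : Type*} [Fintype V] [DecidableEq V]
    (R : Matrix V V ℝ) (x b : V → ℝ) (h : R.mulVec x = b) (s0 : V) :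
    R.det * x s0 = (R.updateCol s0 b).det := by
  have h1 : R.cramer b = R.adjugate.mulVec b := Matrix.cramer_eq_adjugate_mulVec R b
  rw [← h] at h1
  rw [Matrix.mulVec_mulVec, Matrix.adjugate_mul] at h1
  have h2 := congrFun h1 s0
  rw [Matrix.cramer_apply] at h2
  rw [← h]
  rw [h2, Matrix.smul_mulVec, Matrix.one_mulVec]
  simp [smul_eq_mul]

lemma key_identity (hrow : ∀ s, ∑ t, P s t = 1) (hq : ∀ t, q t → t ∉ T)
    (hz : ∀ t, t ∉ T → ¬ q t → rx P T t = 0) (s0 : {u : X // q u}) :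
    BB P T q * (rx P T s0.1).toReal = NN P T q s0 := by
  rw [← det_B hrow hq, ← det_N hrow hq s0]
  exact cramer_combo _ _ _ (mulVec_id hrow hq hz) s0

end MCQ

section MCMain
variable {X : Type*} [Fintype X]

lemma toReal_compare {P₁ P₂ : X → X → ℝ≥0∞} {d : ℝ} (hd : 0 ≤ d)
    (hrow₂ : ∀ s, ∑ t, P₂ s t = 1)
    (h12 : ∀ s t, P₁ s t ≤ ENNReal.ofReal (1+d) * P₂ s t) (s t : X) :
    (P₁ s t).toReal ≤ (1+d) * (P₂ s t).toReal := by
  have hfin : ENNReal.ofReal (1+d) * P₂ s t ≠ ⊤ :=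
    ENNReal.mul_ne_top ENNReal.ofReal_ne_top (P_ne_top hrow₂ s t)
  have h := ENNReal.toReal_mono hfin (h12 s t)
  rwa [ENNReal.toReal_mul, ENNReal.toReal_ofReal (by linarith)] at h

lemma wf_nonneg (P : X → X → ℝ≥0∞) (T : Set X) (q : X → Prop)
    (u : {u : X // q u}) (c : Option {u : X // q u} ⊕ Unit) :
    0 ≤ wf P T q u c := by
  cases c with
  | inl o =>
    cases o with
    | none =>
      refine Finset.sum_nonneg (fun t _ => ?_)
      by_cases ht : t ∈ T <;> simp [ht, ENNReal.toReal_nonneg]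
    | some v => exact ENNReal.toReal_nonneg
  | inr _ =>
    refine Finset.sum_nonneg (fun t _ => ?_)
    by_cases ht : t ∉ T ∧ ¬ q t <;> simp [ht, ENNReal.toReal_nonneg]

lemma wf_compare {P₁ P₂ : X → X → ℝ≥0∞} {T : Set X} {q : X → Prop} {d : ℝ} (hd : 0 ≤ d)
    (hrow₂ : ∀ s, ∑ t, P₂ s t = 1)
    (h12 : ∀ s t, P₁ s t ≤ ENNReal.ofReal (1+d) * P₂ s t)
    (u : {u : X // q u}) (c : Option {u : X // q u} ⊕ Unit) :
    wf P₁ T q u c ≤ (1+d) * wf P₂ T q u c := by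
  cases c with
  | inl o =>
    cases o with
    | none =>
      show bv P₁ T q u ≤ (1+d) * bv P₂ T q u
      rw [bv, bv, Finset.mul_sum]
      refine Finset.sum_le_sum (fun t _ => ?_)
      by_cases ht : t ∈ T
      · simpa [ht] using toReal_compare hd hrow₂ h12 u.1 t
      · simp [ht]
    | some v => exact toReal_compare hd hrow₂ h12 u.1 v.1
  | inr _ =>
    show zv P₁ T q u ≤ (1+d) * zv P₂ T q u
    rw [zv, zv, Finset.mul_sum]
    refine Finset.sum_le_sum (fun t _ => ?_)
    by_cases ht : t ∉ T ∧ ¬ q t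
    · simpa [ht] using toReal_compare hd hrow₂ h12 u.1 t
    · simp [ht]

lemma WW_nonneg (P : X → X → ℝ≥0∞) (T : Set X) (q : X → Prop)
    (κ : {u : X // q u} → (Option {u : X // q u} ⊕ Unit)) : 0 ≤ WW P T q κ :=
  Finset.prod_nonneg (fun u _ => wf_nonneg P T q u (κ u))

lemma WW_compare {P₁ P₂ : X → X → ℝ≥0∞} {T : Set X} {q : X → Prop} {d : ℝ} (hd : 0 ≤ d)
    (hrow₂ : ∀ s, ∑ t, P₂ s t = 1)
    (h12 : ∀ s t, P₁ s t ≤ ENNReal.ofReal (1+d) * P₂ s t)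
    (κ : {u : X // q u} → (Option {u : X // q u} ⊕ Unit)) :
    WW P₁ T q κ ≤ (1+d) ^ (Fintype.card {u : X // q u}) * WW P₂ T q κ := by
  have h1 : WW P₁ T q κ ≤ ∏ u, ((1+d) * wf P₂ T q u (κ u)) :=
    Finset.prod_le_prod (fun u _ => wf_nonneg P₁ T q u (κ u))
      (fun u _ => wf_compare hd hrow₂ h12 u (κ u))
  calc WW P₁ T q κ ≤ ∏ u, ((1+d) * wf P₂ T q u (κ u)) := h1
    _ = (1+d) ^ (Fintype.card {u : X // q u}) * WW P₂ T q κ := by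
        rw [Finset.prod_mul_distrib, Finset.prod_const, Finset.card_univ, WW]

lemma NN_compare {P₁ P₂ : X → X → ℝ≥0∞} {T : Set X} {q : X → Prop} {d : ℝ} (hd : 0 ≤ d)
    (hrow₂ : ∀ s, ∑ t, P₂ s t = 1)
    (h12 : ∀ s t, P₁ s t ≤ ENNReal.ofReal (1+d) * P₂ s t) (s0 : {u : X // q u}) :
    NN P₁ T q s0 ≤ (1+d) ^ (Fintype.card {u : X // q u}) * NN P₂ T q s0 := by
  rw [NN, NN, Finset.mul_sum]
  refine Finset.sum_le_sum (fun κ _ => ?_)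
  rw [← mul_assoc]
  refine mul_le_mul_of_nonneg_right (WW_compare hd hrow₂ h12 κ) ?_
  by_cases h : IsForest (fun u => tmB q u (κ u)) ∧ ¬ IsForest (fun u => tmA q s0 u (κ u)) <;>
    simp [h]

lemma BB_compare {P₁ P₂ : X → X → ℝ≥0∞} {T : Set X} {q : X → Prop} {d : ℝ} (hd : 0 ≤ d)
    (hrow₂ : ∀ s, ∑ t, P₂ s t = 1)
    (h12 : ∀ s t, P₁ s t ≤ ENNReal.ofReal (1+d) * P₂ s t) :
    BB P₁ T q ≤ (1+d) ^ (Fintype.card {u : X // q u}) * BB P₂ T q := by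
  rw [BB, BB, Finset.mul_sum]
  refine Finset.sum_le_sum (fun κ _ => ?_)
  rw [← mul_assoc]
  refine mul_le_mul_of_nonneg_right (WW_compare hd hrow₂ h12 κ) ?_
  by_cases h : IsForest (fun u => tmB q u (κ u)) <;> simp [h]

set_option maxHeartbeats 1000000 in
lemma mc_main (P₁ P₂ : X → X → ℝ≥0∞) (T : Set X)
    (h₁ : ∀ s, ∑ t, P₁ s t = 1) (h₂ : ∀ s, ∑ t, P₂ s t = 1)
    {d : ℝ} (hd : 0 ≤ d)
    (h12 : ∀ s t, P₁ s t ≤ ENNReal.ofReal (1+d) * P₂ s t)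
    (h21 : ∀ s t, P₂ s t ≤ ENNReal.ofReal (1+d) * P₁ s t)
    (s : X) :
    rx P₁ T s ≤ ENNReal.ofReal ((1+d) ^ (2 * Fintype.card X)) * rx P₂ T s := by
  have hc1 : (1:ℝ≥0∞) ≤ ENNReal.ofReal (1+d) := by
    rw [← ENNReal.ofReal_one]; exact ENNReal.ofReal_le_ofReal (by linarith)
  have hpow1 : (1:ℝ) ≤ (1+d) ^ (2 * Fintype.card X) := one_le_pow₀ (by linarith)
  by_cases hsT : s ∈ T
  · rw [rx_mem' P₁ T s hsT, rx_mem' P₂ T s hsT, mul_one]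
    calc (1:ℝ≥0∞) = ENNReal.ofReal 1 := ENNReal.ofReal_one.symm
      _ ≤ _ := ENNReal.ofReal_le_ofReal hpow1
  by_cases hs2 : rx P₂ T s = 0
  · rw [rx_zero_of_zero' P₁ P₂ T hc1 h12 s hs2]; exact zero_le
  obtain ⟨q, hqdef⟩ : ∃ q : X → Prop, q = fun u => u ∉ T ∧ rx P₂ T u ≠ 0 := ⟨_, rfl⟩
  have hqiff : ∀ t, q t ↔ (t ∉ T ∧ rx P₂ T t ≠ 0) := fun t => by rw [hqdef]
  have hq : ∀ t, q t → t ∉ T := fun t ht => ((hqiff t).mp ht).1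
  have hq1 : ∀ u : {u : X // q u}, u.1 ∉ T := fun u => ((hqiff u.1).mp u.2).1
  have hq2 : ∀ u : {u : X // q u}, rx P₂ T u.1 ≠ 0 := fun u => ((hqiff u.1).mp u.2).2
  have hz2 : ∀ t, t ∉ T → ¬ q t → rx P₂ T t = 0 := by
    intro t ht hqt
    by_contra h0
    exact hqt ((hqiff t).mpr ⟨ht, h0⟩)
  have hz1 : ∀ t, t ∉ T → ¬ q t → rx P₁ T t = 0 := fun t ht hqt =>
    rx_zero_of_zero' P₁ P₂ T hc1 h12 t (hz2 t ht hqt)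
  have hs0q : q s := (hqiff s).mpr ⟨hsT, hs2⟩
  set s0 : {u : X // q u} := ⟨s, hs0q⟩ with hs0
  have hkey1 : BB P₁ T q * (rx P₁ T s).toReal = NN P₁ T q s0 := key_identity h₁ hq hz1 s0
  have hkey2 : BB P₂ T q * (rx P₂ T s).toReal = NN P₂ T q s0 := key_identity h₂ hq hz2 s0
  -- positivity of BB P₂
  have hexmin : ∀ u : {u : X // q u}, ∃ k : ℕ, ry P₂ T k u.1 ≠ 0 ∧ ∀ j, j < k → ry P₂ T j u.1 = 0 := by
    intro u
    have hex : ∃ n, ry P₂ T n u.1 ≠ 0 := by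
      by_contra h0
      push_neg at h0
      exact hq2 u (by simp [rx, h0])
    refine ⟨Nat.find hex, Nat.find_spec hex, fun j hj => ?_⟩
    by_contra h0
    exact absurd hj (not_lt.mpr (Nat.find_min' hex h0))
  choose rk hrk1 hrk2 using hexmin
  have hrpos : ∀ u : {u : X // q u}, 1 ≤ rk u := by
    intro u
    by_contra h0
    push_neg at h0
    have h1 : rk u = 0 := by omega
    apply hrk1 u
    rw [h1]
    simp [ry, hq1 u]
  have hstep : ∀ u : {u : X // q u}, ∃ t, P₂ u.1 t ≠ 0 ∧ ry P₂ T (rk u - 1) t ≠ 0 := by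
    intro u
    have hspec : ry P₂ T (rk u) u.1 ≠ 0 := hrk1 u
    obtain ⟨k, hk⟩ : ∃ k, rk u = k + 1 := ⟨rk u - 1, by have := hrpos u; omega⟩
    rw [hk] at hspec
    rw [show ry P₂ T (k+1) u.1 = ∑ t, P₂ u.1 t * ry P₂ T k t from by simp [ry, hq1 u]] at hspec
    rw [show rk u - 1 = k from by omega]
    by_contra h0
    push_neg at h0
    apply hspec
    refine Finset.sum_eq_zero (fun t _ => ?_)
    rcases eq_or_ne (P₂ u.1 t) 0 with h|h
    · rw [h, zero_mul]
    · rw [h0 t h, mul_zero]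
  choose tf htf1 htf2 using hstep
  have hrxtf : ∀ u : {u : X // q u}, tf u ∉ T → rx P₂ T (tf u) ≠ 0 := by
    intro u ht h0
    apply htf2 u
    refine le_antisymm ?_ (zero_le)
    calc ry P₂ T (rk u - 1) (tf u) ≤ rx P₂ T (tf u) := ry_le_rx' P₂ T _ _
      _ = 0 := h0
  set κs : (u : {u : X // q u}) → (Option {u : X // q u} ⊕ Unit) := fun u =>
    if ht : tf u ∈ T then Sum.inl none else Sum.inl (some ⟨tf u, (hqiff (tf u)).mpr ⟨ht, hrxtf u ht⟩⟩) with hκs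
  have hforest : IsForest (fun u => tmB q u (κs u)) := by
    refine ⟨rk, fun u v huv => ?_⟩
    change tmB q u (κs u) = some v at huv
    rw [hκs] at huv
    by_cases ht : tf u ∈ T
    · simp [ht, tmB] at huv
    · simp only [ht, dif_neg, not_false_iff, tmB] at huv
      have hv : v = ⟨tf u, (hqiff (tf u)).mpr ⟨ht, hrxtf u ht⟩⟩ := by
        simpa using huv.symm
      have h1 : rk v ≤ rk u - 1 := by
        by_contra hcon
        push_neg at hcon
        apply htf2 u
        have h2 := hrk2 v (rk u - 1) (by omega)
        rw [hv] at h2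
        exact h2
      have := hrpos u
      omega
  have hwfpos : ∀ u : {u : X // q u}, 0 < wf P₂ T q u (κs u) := by
    intro u
    have hPpos : 0 < (P₂ u.1 (tf u)).toReal :=
      ENNReal.toReal_pos (htf1 u) (P_ne_top h₂ u.1 (tf u))
    rw [hκs]
    by_cases ht : tf u ∈ T
    · simp only [ht, dif_pos]
      show 0 < bv P₂ T q u
      have hbv : bv P₂ T q u = ∑ t, if t ∈ T then (P₂ u.1 t).toReal else 0 := rfl
      rw [hbv]
      have hle : (if tf u ∈ T then (P₂ u.1 (tf u)).toReal else 0)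
          ≤ ∑ t, if t ∈ T then (P₂ u.1 t).toReal else 0 := by
        refine Finset.single_le_sum (f := fun t => if t ∈ T then (P₂ u.1 t).toReal else 0)
          (fun t _ => ?_) (Finset.mem_univ (tf u))
        by_cases h : t ∈ T <;> simp [h, ENNReal.toReal_nonneg]
      rw [if_pos ht] at hle
      linarith
    · simp only [ht, dif_neg, not_false_iff]
      exact hPpos
  have hWWpos : 0 < WW P₂ T q κs := Finset.prod_pos (fun u _ => hwfpos u)
  have hBB2pos : 0 < BB P₂ T q := by
    unfold BB
    have hle : WW P₂ T q κs * (if IsForest (fun u => tmB q u (κs u)) then (1:ℝ) else 0)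
        ≤ ∑ κ : {u : X // q u} → (Option {u : X // q u} ⊕ Unit),
        WW P₂ T q κ * (if IsForest (fun u => tmB q u (κ u)) then 1 else 0) := by
      refine Finset.single_le_sum
        (f := fun κ => WW P₂ T q κ * (if IsForest (fun u => tmB q u (κ u)) then (1:ℝ) else 0))
        (fun κ _ => mul_nonneg (WW_nonneg P₂ T q κ) ?_) (Finset.mem_univ κs)
      by_cases h : IsForest (fun u => tmB q u (κ u)) <;> simp [h]
    rw [if_pos hforest, mul_one] at hle
    linarith
  -- comparisons
  set m := Fintype.card {u : X // q u} with hm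
  have hcard : m ≤ Fintype.card X := Fintype.card_subtype_le _
  set K : ℝ := (1+d) ^ m with hK
  have hK1 : (1:ℝ) ≤ K := one_le_pow₀ (by linarith)
  have hNN : NN P₁ T q s0 ≤ K * NN P₂ T q s0 := by rw [hK, hm]; exact NN_compare hd h₂ h12 s0
  have hBB : BB P₂ T q ≤ K * BB P₁ T q := by rw [hK, hm]; exact BB_compare hd h₁ h21
  have hBB1pos : 0 < BB P₁ T q := by nlinarith
  have hx1 : 0 ≤ (rx P₁ T s).toReal := ENNReal.toReal_nonneg
  have hx2 : 0 ≤ (rx P₂ T s).toReal := ENNReal.toReal_nonneg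
  have hmain : (rx P₁ T s).toReal ≤ K^2 * (rx P₂ T s).toReal := by
    have h1 : BB P₁ T q * (rx P₁ T s).toReal ≤ K * (BB P₂ T q * (rx P₂ T s).toReal) := by
      rw [hkey1, hkey2]; exact hNN
    have h2 : BB P₂ T q * (rx P₁ T s).toReal ≤ K * BB P₁ T q * (rx P₁ T s).toReal :=
      mul_le_mul_of_nonneg_right hBB hx1
    have h3 : K * BB P₁ T q * (rx P₁ T s).toReal ≤ K * (K * (BB P₂ T q * (rx P₂ T s).toReal)) := by
      rw [mul_assoc]
      exact mul_le_mul_of_nonneg_left h1 (by linarith)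
    have h4 : BB P₂ T q * (rx P₁ T s).toReal ≤ BB P₂ T q * (K^2 * (rx P₂ T s).toReal) := by
      calc BB P₂ T q * (rx P₁ T s).toReal ≤ K * (K * (BB P₂ T q * (rx P₂ T s).toReal)) :=
            le_trans h2 h3
        _ = BB P₂ T q * (K^2 * (rx P₂ T s).toReal) := by ring
    exact le_of_mul_le_mul_left h4 hBB2pos
  have hpowle : K^2 ≤ (1+d) ^ (2 * Fintype.card X) := by
    rw [hK, ← pow_mul]
    exact pow_le_pow_right₀ (by linarith) (by omega)
  have hfin1 : rx P₁ T s ≠ ⊤ := ne_top_of_le_ne_top (by simp) (rx_le_one' P₁ T h₁ s)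
  have hfin2 : rx P₂ T s ≠ ⊤ := ne_top_of_le_ne_top (by simp) (rx_le_one' P₂ T h₂ s)
  calc rx P₁ T s = ENNReal.ofReal ((rx P₁ T s).toReal) := (ENNReal.ofReal_toReal hfin1).symm
    _ ≤ ENNReal.ofReal ((1+d) ^ (2 * Fintype.card X) * (rx P₂ T s).toReal) := by
        refine ENNReal.ofReal_le_ofReal ?_
        calc (rx P₁ T s).toReal ≤ K^2 * (rx P₂ T s).toReal := hmain
          _ ≤ (1+d) ^ (2 * Fintype.card X) * (rx P₂ T s).toReal :=
              mul_le_mul_of_nonneg_right hpowle hx2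
    _ = ENNReal.ofReal ((1+d) ^ (2 * Fintype.card X)) * ENNReal.ofReal ((rx P₂ T s).toReal) :=
        ENNReal.ofReal_mul (by linarith)
    _ = ENNReal.ofReal ((1+d) ^ (2 * Fintype.card X)) * rx P₂ T s := by
        rw [ENNReal.ofReal_toReal hfin2]

end MCMain


section Game
variable [DecidableEq A] (G : SG S A) (f g : S → A)
  (hf : ∀ s, f s ∈ G.actions s) (hg : ∀ s, g s ∈ G.actions s)

/-- the action chosen by the MD profile at a state -/
def mdAct (s : S) : A := if G.isMax s then f s else g s

/-- the transition kernel induced by an MD profile -/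
noncomputable def mdP (s t : S) : ℝ≥0∞ := G.trans s (mdAct G f g s) t

lemma mdP_row (s : S) : ∑ t, mdP G f g s t = 1 := G.trans_sum s (mdAct G f g s)

lemma runProb_hist (l : List (A × S)) (h h' : List (S × A)) (s : S) :
    runProb G (Strategy.ofMD G f hf) (Strategy.ofMD G g hg) h s l
      = runProb G (Strategy.ofMD G f hf) (Strategy.ofMD G g hg) h' s l := by
  induction l generalizing h h' s with
  | nil => rfl
  | cons p l ih =>
    obtain ⟨a, s'⟩ := p
    simp only [runProb]
    rw [ih (h ++ [(s,a)]) (h' ++ [(s,a)]) s']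
    rfl

lemma runProb_step (a : A) (s' : S) (l : List (A × S)) (s : S) :
    runProb G (Strategy.ofMD G f hf) (Strategy.ofMD G g hg) [] s ((a, s') :: l)
      = (if a = mdAct G f g s then 1 else 0) * G.trans s a s'
        * runProb G (Strategy.ofMD G f hf) (Strategy.ofMD G g hg) [] s' l := by
  simp only [runProb]
  rw [runProb_hist G f g hf hg l ([] ++ [(s,a)]) [] s']
  congr 2
  rw [mdAct]
  by_cases h : G.isMax s <;> simp [h, Strategy.ofMD]

lemma runProb_total : ∀ (n : ℕ) (s : S),
    ∑ w : Fin n → A × S,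
      runProb G (Strategy.ofMD G f hf) (Strategy.ofMD G g hg) [] s (List.ofFn w) = 1 := by
  intro n
  induction n with
  | zero =>
    intro s
    rw [Fintype.sum_unique]
    rfl
  | succ n ih =>
    intro s
    rw [← Equiv.sum_comp (Fin.consEquiv (fun _ => A × S))]
    rw [Fintype.sum_prod_type]
    have hofn : ∀ (p : A × S) (w : Fin n → A × S),
        List.ofFn (Fin.consEquiv (fun _ => A × S) (p, w)) = (p.1, p.2) :: List.ofFn w := by
      intro p w
      rw [List.ofFn_succ]
      simp [Fin.consEquiv]
    calc ∑ p : A × S, ∑ w : Fin n → A × S,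
          runProb G (Strategy.ofMD G f hf) (Strategy.ofMD G g hg) [] s
            (List.ofFn (Fin.consEquiv (fun _ => A × S) (p, w)))
        = ∑ p : A × S, ∑ w : Fin n → A × S,
            (if p.1 = mdAct G f g s then 1 else 0) * G.trans s p.1 p.2
              * runProb G (Strategy.ofMD G f hf) (Strategy.ofMD G g hg) [] p.2 (List.ofFn w) := by
          refine Finset.sum_congr rfl (fun p _ => Finset.sum_congr rfl (fun w _ => ?_))
          rw [hofn p w, runProb_step]
      _ = ∑ p : A × S, (if p.1 = mdAct G f g s then 1 else 0) * G.trans s p.1 p.2 := by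
          refine Finset.sum_congr rfl (fun p _ => ?_)
          rw [← Finset.mul_sum, ih p.2, mul_one]
      _ = 1 := by
          rw [Fintype.sum_prod_type]
          have : ∀ a : A, ∑ s' : S, (if a = mdAct G f g s then 1 else 0) * G.trans s a s'
              = if a = mdAct G f g s then ∑ s' : S, G.trans s a s' else 0 := by
            intro a
            by_cases h : a = mdAct G f g s <;> simp [h]
          rw [Finset.sum_congr rfl (fun a _ => this a)]
          rw [Finset.sum_ite_eq' Finset.univ (mdAct G f g s)
            (fun a => ∑ s' : S, G.trans s a s')]
          simp [G.trans_sum]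

lemma reachProbN_eq_ry (T' : Set S) : ∀ (n : ℕ) (s : S),
    reachProbN G (Strategy.ofMD G f hf) (Strategy.ofMD G g hg) T' s n
      = ry (mdP G f g) T' n s := by
  intro n
  induction n with
  | zero =>
    intro s
    rw [reachProbN, Fintype.sum_unique, Set.indicator_apply]
    by_cases h : s ∈ T'
    · rw [if_pos (show (default : Fin 0 → A × S)
          ∈ {w : Fin 0 → A × S | s ∈ T' ∨ ∃ i, (w i).2 ∈ T'} from Or.inl h)]
      rw [show ry (mdP G f g) T' 0 s = 1 from by simp [ry, h]]
      rfl
    · have hnm : (default : Fin 0 → A × S)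
          ∉ {w : Fin 0 → A × S | s ∈ T' ∨ ∃ i, (w i).2 ∈ T'} := by
        rintro (hc | ⟨i, _⟩)
        · exact h hc
        · exact i.elim0
      rw [if_neg hnm, show ry (mdP G f g) T' 0 s = 0 from by simp [ry, h]]
  | succ n ih =>
    intro s
    by_cases hs : s ∈ T'
    · have h1 : reachProbN G (Strategy.ofMD G f hf) (Strategy.ofMD G g hg) T' s (n+1)
          = ∑ w : Fin (n+1) → A × S,
            runProb G (Strategy.ofMD G f hf) (Strategy.ofMD G g hg) [] s (List.ofFn w) := by
        rw [reachProbN]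
        refine Finset.sum_congr rfl (fun w _ => ?_)
        rw [Set.indicator_apply, if_pos (show w
          ∈ {w : Fin (n+1) → A × S | s ∈ T' ∨ ∃ i, (w i).2 ∈ T'} from Or.inl hs)]
      rw [h1, runProb_total]
      simp [ry, hs]
    · rw [reachProbN]
      rw [← Equiv.sum_comp (Fin.consEquiv (fun _ => A × S))]
      rw [Fintype.sum_prod_type]
      have hofn : ∀ (p : A × S) (w : Fin n → A × S),
          List.ofFn (Fin.consEquiv (fun _ => A × S) (p, w)) = (p.1, p.2) :: List.ofFn w := by
        intro p w
        rw [List.ofFn_succ]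
        simp [Fin.consEquiv]
      have hmem : ∀ (p : A × S) (w : Fin n → A × S),
          ((Fin.consEquiv (fun _ => A × S) (p, w))
            ∈ {w : Fin (n+1) → A × S | s ∈ T' ∨ ∃ i, (w i).2 ∈ T'})
            ↔ (p.2 ∈ T' ∨ ∃ i : Fin n, (w i).2 ∈ T') := by
        intro p w
        simp only [Set.mem_setOf_eq, Fin.exists_fin_succ, Fin.consEquiv, Equiv.coe_fn_mk,
          Fin.cons_zero, Fin.cons_succ]
        constructor
        · rintro (h|h)
          · exact absurd h hs
          · exact h
        · exact Or.inr
      calc ∑ p : A × S, ∑ w : Fin n → A × S,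
            Set.indicator {w : Fin (n+1) → A × S | s ∈ T' ∨ ∃ i, (w i).2 ∈ T'}
              (fun w => runProb G (Strategy.ofMD G f hf) (Strategy.ofMD G g hg) [] s (List.ofFn w))
              (Fin.consEquiv (fun _ => A × S) (p, w))
          = ∑ p : A × S, (if p.1 = mdAct G f g s then 1 else 0) * G.trans s p.1 p.2 *
              (∑ w : Fin n → A × S, (if p.2 ∈ T' ∨ ∃ i : Fin n, (w i).2 ∈ T' then (1:ℝ≥0∞) else 0)
                * runProb G (Strategy.ofMD G f hf) (Strategy.ofMD G g hg) [] p.2 (List.ofFn w)) := by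
            refine Finset.sum_congr rfl (fun p _ => ?_)
            rw [Finset.mul_sum]
            refine Finset.sum_congr rfl (fun w _ => ?_)
            rw [Set.indicator_apply]
            rw [hofn p w, runProb_step]
            by_cases hm : p.2 ∈ T' ∨ ∃ i : Fin n, (w i).2 ∈ T'
            · rw [if_pos ((hmem p w).mpr hm), if_pos hm, one_mul]
            · rw [if_neg (fun hc => hm ((hmem p w).mp hc)), if_neg hm, zero_mul, mul_zero]
        _ = ∑ p : A × S, (if p.1 = mdAct G f g s then 1 else 0) * G.trans s p.1 p.2 *
              reachProbN G (Strategy.ofMD G f hf) (Strategy.ofMD G g hg) T' p.2 n := by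
            refine Finset.sum_congr rfl (fun p _ => ?_)
            congr 1
            rw [reachProbN]
            refine Finset.sum_congr rfl (fun w _ => ?_)
            rw [Set.indicator_apply]
            by_cases hm : p.2 ∈ T' ∨ ∃ i : Fin n, (w i).2 ∈ T'
            · rw [if_pos hm, if_pos (show w
                ∈ {w : Fin n → A × S | p.2 ∈ T' ∨ ∃ i, (w i).2 ∈ T'} from hm), one_mul]
            · rw [if_neg hm, if_neg (show w
                ∉ {w : Fin n → A × S | p.2 ∈ T' ∨ ∃ i, (w i).2 ∈ T'} from hm), zero_mul]
        _ = ry (mdP G f g) T' (n+1) s := by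
            rw [show ry (mdP G f g) T' (n+1) s = ∑ t, mdP G f g s t * ry (mdP G f g) T' n t
              from by simp [ry, hs]]
            rw [Fintype.sum_prod_type]
            have hA : ∀ a : A, ∑ t : S, (if a = mdAct G f g s then 1 else 0) * G.trans s a t *
                reachProbN G (Strategy.ofMD G f hf) (Strategy.ofMD G g hg) T' t n
                = if a = mdAct G f g s then
                    ∑ t : S, G.trans s a t * ry (mdP G f g) T' n t else 0 := by
              intro a
              by_cases h : a = mdAct G f g s
              · rw [if_pos h, if_pos h]
                refine Finset.sum_congr rfl (fun t _ => ?_)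
                rw [ih t, one_mul]
              · rw [if_neg h, if_neg h]
                refine Finset.sum_eq_zero (fun t _ => ?_)
                rw [zero_mul, zero_mul]
            rw [Finset.sum_congr rfl (fun a _ => hA a)]
            rw [Finset.sum_ite_eq' Finset.univ (mdAct G f g s)
              (fun a => ∑ t : S, G.trans s a t * ry (mdP G f g) T' n t)]
            simp [mdP]

lemma reachProb_eq_rx (T' : Set S) (s : S) :
    reachProb G (Strategy.ofMD G f hf) (Strategy.ofMD G g hg) T' s = rx (mdP G f g) T' s := by
  rw [reachProb, rx]
  exact iSup_congr (fun n => reachProbN_eq_ry G f g hf hg T' n s)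

end Game

section Dist
variable [DecidableEq A]

lemma SG.trans_ne_top (G : SG S A) (s : S) (a : A) (s' : S) : G.trans s a s' ≠ ⊤ := by
  intro h
  have h1 : G.trans s a s' ≤ ∑ t, G.trans s a t :=
    Finset.single_le_sum (fun _ _ => zero_le) (Finset.mem_univ s')
  rw [G.trans_sum s a, h] at h1
  exact (by simp : ¬ (⊤:ℝ≥0∞) ≤ 1) h1

lemma distR_set_bddAbove (G₁ G₂ : SG S A) : BddAbove (insert (1:ℝ)
    {x : ℝ | ∃ (s : S) (a : A) (s' : S), a ∈ G₁.actions s ∧ G₁.trans s a s' ≠ 0 ∧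
      x = max ((G₁.trans s a s').toReal / (G₂.trans s a s').toReal)
              ((G₂.trans s a s').toReal / (G₁.trans s a s').toReal)}) := by
  have hfin : (insert (1:ℝ)
      {x : ℝ | ∃ (s : S) (a : A) (s' : S), a ∈ G₁.actions s ∧ G₁.trans s a s' ≠ 0 ∧
        x = max ((G₁.trans s a s').toReal / (G₂.trans s a s').toReal)
                ((G₂.trans s a s').toReal / (G₁.trans s a s').toReal)}).Finite := by
    refine Set.Finite.subset (Set.Finite.insert 1 (Set.finite_range
      (fun p : S × A × S => max ((G₁.trans p.1 p.2.1 p.2.2).toReal / (G₂.trans p.1 p.2.1 p.2.2).toReal)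
        ((G₂.trans p.1 p.2.1 p.2.2).toReal / (G₁.trans p.1 p.2.1 p.2.2).toReal)))) ?_
    rintro x (rfl | ⟨s, a, s', _, _, hx⟩)
    · exact Set.mem_insert _ _
    · exact Set.mem_insert_of_mem _ ⟨(s, a, s'), hx.symm⟩
  exact hfin.bddAbove

lemma distR_nonneg (G₁ G₂ : SG S A) : 0 ≤ distR G₁ G₂ := by
  have h1 : (1:ℝ) ≤ sSup (insert (1:ℝ)
      {x : ℝ | ∃ (s : S) (a : A) (s' : S), a ∈ G₁.actions s ∧ G₁.trans s a s' ≠ 0 ∧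
        x = max ((G₁.trans s a s').toReal / (G₂.trans s a s').toReal)
                ((G₂.trans s a s').toReal / (G₁.trans s a s').toReal)}) :=
    le_csSup (distR_set_bddAbove G₁ G₂) (Set.mem_insert _ _)
  rw [distR]
  linarith

lemma distR_compare (G₁ G₂ : SG S A)
    (hsupp : ∀ (s : S) (a : A), a ∈ G₁.actions s →
      ∀ s' : S, (G₁.trans s a s' = 0 ↔ G₂.trans s a s' = 0))
    (s : S) (a : A) (ha : a ∈ G₁.actions s) (s' : S) :
    G₁.trans s a s' ≤ ENNReal.ofReal (1 + distR G₁ G₂) * G₂.trans s a s' ∧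
    G₂.trans s a s' ≤ ENNReal.ofReal (1 + distR G₁ G₂) * G₁.trans s a s' := by
  have hd0 := distR_nonneg G₁ G₂
  by_cases h0 : G₁.trans s a s' = 0
  · have h0' : G₂.trans s a s' = 0 := (hsupp s a ha s').mp h0
    rw [h0, h0']
    simp
  · have h0' : G₂.trans s a s' ≠ 0 := fun hc => h0 ((hsupp s a ha s').mpr hc)
    set x : ℝ := max ((G₁.trans s a s').toReal / (G₂.trans s a s').toReal)
        ((G₂.trans s a s').toReal / (G₁.trans s a s').toReal) with hx
    have hxmem : x ∈ insert (1:ℝ)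
        {x : ℝ | ∃ (s : S) (a : A) (s' : S), a ∈ G₁.actions s ∧ G₁.trans s a s' ≠ 0 ∧
          x = max ((G₁.trans s a s').toReal / (G₂.trans s a s').toReal)
                  ((G₂.trans s a s').toReal / (G₁.trans s a s').toReal)} :=
      Set.mem_insert_of_mem _ ⟨s, a, s', ha, h0, rfl⟩
    have hxle : x ≤ 1 + distR G₁ G₂ := by
      have := le_csSup (distR_set_bddAbove G₁ G₂) hxmem
      rw [distR]
      linarith
    have ht1 : (0:ℝ) < (G₁.trans s a s').toReal :=
      ENNReal.toReal_pos h0 (G₁.trans_ne_top s a s')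
    have ht2 : (0:ℝ) < (G₂.trans s a s').toReal :=
      ENNReal.toReal_pos h0' (G₂.trans_ne_top s a s')
    have hb1 : (G₁.trans s a s').toReal ≤ (1 + distR G₁ G₂) * (G₂.trans s a s').toReal := by
      have hr : (G₁.trans s a s').toReal / (G₂.trans s a s').toReal ≤ 1 + distR G₁ G₂ :=
        le_trans (le_max_left _ _) hxle
      calc (G₁.trans s a s').toReal
          = ((G₁.trans s a s').toReal / (G₂.trans s a s').toReal) * (G₂.trans s a s').toReal := by
            field_simp
        _ ≤ (1 + distR G₁ G₂) * (G₂.trans s a s').toReal :=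
            mul_le_mul_of_nonneg_right hr (le_of_lt ht2)
    have hb2 : (G₂.trans s a s').toReal ≤ (1 + distR G₁ G₂) * (G₁.trans s a s').toReal := by
      have hr : (G₂.trans s a s').toReal / (G₁.trans s a s').toReal ≤ 1 + distR G₁ G₂ :=
        le_trans (le_max_right _ _) hxle
      calc (G₂.trans s a s').toReal
          = ((G₂.trans s a s').toReal / (G₁.trans s a s').toReal) * (G₁.trans s a s').toReal := by
            field_simp
        _ ≤ (1 + distR G₁ G₂) * (G₁.trans s a s').toReal :=
            mul_le_mul_of_nonneg_right hr (le_of_lt ht1)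
    constructor
    · calc G₁.trans s a s' = ENNReal.ofReal ((G₁.trans s a s').toReal) :=
            (ENNReal.ofReal_toReal (G₁.trans_ne_top s a s')).symm
        _ ≤ ENNReal.ofReal ((1 + distR G₁ G₂) * (G₂.trans s a s').toReal) :=
            ENNReal.ofReal_le_ofReal hb1
        _ = ENNReal.ofReal (1 + distR G₁ G₂) * ENNReal.ofReal ((G₂.trans s a s').toReal) :=
            ENNReal.ofReal_mul (by linarith)
        _ = ENNReal.ofReal (1 + distR G₁ G₂) * G₂.trans s a s' := by
            rw [ENNReal.ofReal_toReal (G₂.trans_ne_top s a s')]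
    · calc G₂.trans s a s' = ENNReal.ofReal ((G₂.trans s a s').toReal) :=
            (ENNReal.ofReal_toReal (G₂.trans_ne_top s a s')).symm
        _ ≤ ENNReal.ofReal ((1 + distR G₁ G₂) * (G₁.trans s a s').toReal) :=
            ENNReal.ofReal_le_ofReal hb2
        _ = ENNReal.ofReal (1 + distR G₁ G₂) * ENNReal.ofReal ((G₁.trans s a s').toReal) :=
            ENNReal.ofReal_mul (by linarith)
        _ = ENNReal.ofReal (1 + distR G₁ G₂) * G₁.trans s a s' := by
            rw [ENNReal.ofReal_toReal (G₁.trans_ne_top s a s')]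

lemma mdAct_mem (G : SG S A) (f g : S → A) (hf : ∀ s, f s ∈ G.actions s)
    (hg : ∀ s, g s ∈ G.actions s) (s : S) : mdAct G f g s ∈ G.actions s := by
  rw [mdAct]
  by_cases h : G.isMax s <;> simp [h, hf s, hg s]

set_option maxHeartbeats 2000000 in
lemma reachVal_le_aux (G₁ G₂ : SG S A)
    (hmax : G₁.isMax = G₂.isMax) (hact : G₁.actions = G₂.actions)
    {d : ℝ} (hd : 0 ≤ d)
    (h12 : ∀ (s : S) (a : A), a ∈ G₁.actions s → ∀ s' : S,
      G₁.trans s a s' ≤ ENNReal.ofReal (1+d) * G₂.trans s a s')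
    (h21 : ∀ (s : S) (a : A), a ∈ G₁.actions s → ∀ s' : S,
      G₂.trans s a s' ≤ ENNReal.ofReal (1+d) * G₁.trans s a s')
    (T : Set S) (s : S) :
    MDReachVal G₁ T s ≤ ENNReal.ofReal ((1+d) ^ (2 * Fintype.card S)) * MDReachVal G₂ T s := by
  rw [MDReachVal, MDReachVal]
  refine iSup_le (fun f => ?_)
  have hf2 : ∀ t, f.1 t ∈ G₂.actions t := fun t => by rw [← hact]; exact f.2 t
  -- the per-profile bound
  have hprof : ∀ (g : S → A) (hg1 : ∀ t, g t ∈ G₁.actions t) (hg2 : ∀ t, g t ∈ G₂.actions t),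
      reachProb G₁ (Strategy.ofMD G₁ f.1 f.2) (Strategy.ofMD G₁ g hg1) T s
        ≤ ENNReal.ofReal ((1+d) ^ (2 * Fintype.card S)) *
          reachProb G₂ (Strategy.ofMD G₂ f.1 hf2) (Strategy.ofMD G₂ g hg2) T s := by
    intro g hg1 hg2
    rw [reachProb_eq_rx G₁ f.1 g f.2 hg1 T s, reachProb_eq_rx G₂ f.1 g hf2 hg2 T s]
    have hactsame : ∀ t, mdAct G₁ f.1 g t = mdAct G₂ f.1 g t := by
      intro t; rw [mdAct, mdAct, hmax]
    refine mc_main (mdP G₁ f.1 g) (mdP G₂ f.1 g) T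
      (mdP_row G₁ f.1 g) (mdP_row G₂ f.1 g) hd ?_ ?_ s
    · intro u t
      rw [mdP, mdP, ← hactsame u]
      exact h12 u (mdAct G₁ f.1 g u) (mdAct_mem G₁ f.1 g f.2 hg1 u) t
    · intro u t
      rw [mdP, mdP, ← hactsame u]
      exact h21 u (mdAct G₁ f.1 g u) (mdAct_mem G₁ f.1 g f.2 hg1 u) t
  -- choose a minimizing Minimizer response in G₂
  have hne : Nonempty {g : S → A // ∀ t, g t ∈ G₂.actions t} :=
    ⟨⟨fun t => (G₂.actions_nonempty t).choose, fun t => (G₂.actions_nonempty t).choose_spec⟩⟩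
  obtain ⟨g2, hg2min⟩ := Finite.exists_min
    (fun g : {g : S → A // ∀ t, g t ∈ G₂.actions t} =>
      reachProb G₂ (Strategy.ofMD G₂ f.1 hf2) (Strategy.ofMD G₂ g.1 g.2) T s)
  have hg21 : ∀ t, g2.1 t ∈ G₁.actions t := fun t => by rw [hact]; exact g2.2 t
  calc ⨅ g : {g : S → A // ∀ t, g t ∈ G₁.actions t},
        reachProb G₁ (Strategy.ofMD G₁ f.1 f.2) (Strategy.ofMD G₁ g.1 g.2) T s
      ≤ reachProb G₁ (Strategy.ofMD G₁ f.1 f.2) (Strategy.ofMD G₁ g2.1 hg21) T s :=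
        iInf_le _ (⟨g2.1, hg21⟩ : {g : S → A // ∀ t, g t ∈ G₁.actions t})
    _ ≤ ENNReal.ofReal ((1+d) ^ (2 * Fintype.card S)) *
          reachProb G₂ (Strategy.ofMD G₂ f.1 hf2) (Strategy.ofMD G₂ g2.1 g2.2) T s :=
        hprof g2.1 hg21 g2.2
    _ = ENNReal.ofReal ((1+d) ^ (2 * Fintype.card S)) *
          ⨅ g : {g : S → A // ∀ t, g t ∈ G₂.actions t},
            reachProb G₂ (Strategy.ofMD G₂ f.1 hf2) (Strategy.ofMD G₂ g.1 g.2) T s := by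
        congr 1
        exact le_antisymm (le_iInf hg2min) (iInf_le _ g2)
    _ ≤ ENNReal.ofReal ((1+d) ^ (2 * Fintype.card S)) *
          ⨆ f' : {f : S → A // ∀ t, f t ∈ G₂.actions t},
            ⨅ g : {g : S → A // ∀ t, g t ∈ G₂.actions t},
              reachProb G₂ (Strategy.ofMD G₂ f'.1 f'.2) (Strategy.ofMD G₂ g.1 g.2) T s :=
        mul_le_mul_right (le_iSup (fun f' : {f : S → A // ∀ t, f t ∈ G₂.actions t} =>
          ⨅ g : {g : S → A // ∀ t, g t ∈ G₂.actions t},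
            reachProb G₂ (Strategy.ofMD G₂ f'.1 f'.2) (Strategy.ofMD G₂ g.1 g.2) T s)
          ⟨f.1, hf2⟩) _

end Dist

/-- Perturbation bound for reachability values of structurally
equivalent games: with `d = dist_R(G₁,G₂) ≥ 0`, the reachability values of the two
games differ at most by the multiplicative factor `(1 + d)^{2|S|}` in each direction. -/
theorem reachVal_perturbation [DecidableEq A] (G₁ G₂ : SG S A)
    (hmax : G₁.isMax = G₂.isMax) (hact : G₁.actions = G₂.actions)
    (hsupp : ∀ (s : S) (a : A), a ∈ G₁.actions s →
      ∀ s' : S, (G₁.trans s a s' = 0 ↔ G₂.trans s a s' = 0))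
    (T : Set S) (s : S) :
    0 ≤ distR G₁ G₂ ∧
    MDReachVal G₁ T s ≤
      ENNReal.ofReal ((1 + distR G₁ G₂) ^ (2 * Fintype.card S)) * MDReachVal G₂ T s ∧
    MDReachVal G₂ T s ≤
      ENNReal.ofReal ((1 + distR G₁ G₂) ^ (2 * Fintype.card S)) * MDReachVal G₁ T s := by
  have hd0 := distR_nonneg G₁ G₂
  refine ⟨hd0, ?_, ?_⟩
  · exact reachVal_le_aux G₁ G₂ hmax hact hd0
      (fun s a ha s' => (distR_compare G₁ G₂ hsupp s a ha s').1)
      (fun s a ha s' => (distR_compare G₁ G₂ hsupp s a ha s').2)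
      T s
  · refine reachVal_le_aux G₂ G₁ hmax.symm hact.symm hd0
      (fun s a ha s' => ?_) (fun s a ha s' => ?_) T s
    · exact (distR_compare G₁ G₂ hsupp s a (by rw [hact]; exact ha) s').2
    · exact (distR_compare G₁ G₂ hsupp s a (by rw [hact]; exact ha) s').1
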